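/- arXiv:1808.10213 — 2 statements merged into one kernel-verified Lean document; each statement's English description precedes it below -/
import Mathlib

section
/- For the deterministic flow φ_t on E = ℝ × [0,1] and for each γ ∈ {1,3}, the set A_γ = ([−γ,γ] × {0}) ∪ ({−γ} × [0,1]) ∪ ({γ} × [0,1]) is strictly invariant: φ_t(A_γ) = A_γ for all t ≥ 0. -/
noncomputable section

/-- `Γ = {−3,−1,1,3}`. -/
def Gam : Set ℝ := {-3, -1, 1, 3}

/-- `c(x) = 1 + min(dist(x,Γ), 1)`. -/
noncomputable def c (x : ℝ) : ℝ := 1 + min (Metric.infDist x Gam) 1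

/-- The explicit solution `h(t,x,y) = (y − c(x)) eᵗ + c(x)`. -/
noncomputable def hh (t x y : ℝ) : ℝ := (y - c x) * Real.exp t + c x

/-- Hitting time of 0. -/
noncomputable def tau (x y : ℝ) : ℝ := sInf {s : ℝ | 0 ≤ s ∧ hh s x y = 0}

/-- The deterministic flow on `E = ℝ × [0,1]`: for `t ≤ τ(x,y)` (equivalently,
while `h(t,x,y) ≥ 0`, since `h(·,x,y)` is nonincreasing for `y ∈ [0,1]`) it is
`(x, h(t,x,y))`, and for `t ≥ τ(x,y)` it is `(x e^{τ(x,y)−t}, 0)`. -/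
noncomputable def phi (t : ℝ) (p : ℝ × ℝ) : ℝ × ℝ :=
  if 0 ≤ hh t p.1 p.2 then (p.1, hh t p.1 p.2)
  else (p.1 * Real.exp (tau p.1 p.2 - t), 0)

/-- The candidate attractor `A_γ = ([−γ,γ] × {0}) ∪ ({−γ} × [0,1]) ∪ ({γ} × [0,1])`. -/
def Ag (γ : ℝ) : Set (ℝ × ℝ) :=
  (Set.Icc (-γ) γ ×ˢ {0}) ∪ ({-γ} ×ˢ Set.Icc (0:ℝ) 1) ∪ ({γ} ×ˢ Set.Icc (0:ℝ) 1)

/-!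
Where `c = 1`, in particular on the walls `x = ±γ` (as `±γ ∈ Γ`), the flow lowers a point
`(x, y)` to height `1 - (1 - y) eᵗ` until it hits the axis; from then on, like every point of
the axis, it contracts towards `0` by the factor `e^{-t}`. So `φ_t` maps `A_γ` into itself.
Conversely `(x, y)` on a wall is the image of the wall point at height `1 - (1 - y) e^{-t}`,
and `(x, 0)` on the axis is the image of `(x eᵗ, 0)` when `|x| eᵗ ≤ γ`, and otherwise of the
point of the wall on its side at height `1 - γ / (|x| eᵗ)`.
-/

open Real Set

lemma one_le_c (x : ℝ) : 1 ≤ c x :=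
  le_add_of_nonneg_right (le_min Metric.infDist_nonneg zero_le_one)

lemma c_eq_one_of_mem {x : ℝ} (hx : x ∈ Gam) : c x = 1 := by
  simp [c, Metric.infDist_zero_of_mem hx]

lemma hh_eq_zero_iff {s x y : ℝ} (hyc : y < c x) :
    hh s x y = 0 ↔ exp s = c x / (c x - y) := by
  rw [hh, eq_div_iff (sub_pos.2 hyc).ne']
  constructor <;> intro h <;> linarith

lemma tau_eq_log {x y : ℝ} (hy : 0 ≤ y) (hyc : y < c x) :
    tau x y = log (c x / (c x - y)) := by
  have hpos : 0 < c x / (c x - y) := div_pos (by linarith [one_le_c x]) (sub_pos.2 hyc)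
  have hzeros : {s | 0 ≤ s ∧ hh s x y = 0} = {log (c x / (c x - y))} := by
    ext s
    simp only [mem_ofPred_eq, mem_singleton_iff, hh_eq_zero_iff hyc]
    constructor
    · rintro ⟨-, hs⟩
      rw [← hs, log_exp]
    · rintro rfl
      refine ⟨log_nonneg ?_, exp_log hpos⟩
      rw [le_div_iff₀ (sub_pos.2 hyc)]
      linarith
  rw [tau, hzeros, csInf_singleton]

/-- Once `h(t,x,y) ≤ 0` the trajectory has reached the axis at time `τ = log (c / (c - y))`
and contracted by `e^{τ - t}` since then. -/
lemma phi_of_hh_nonpos {t x y : ℝ} (hy : 0 ≤ y) (hneg : hh t x y ≤ 0) :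
    phi t (x, y) = (x * c x / ((c x - y) * exp t), 0) := by
  have hc := one_le_c x
  have hyc : y < c x := by
    by_contra! hcy
    have : 0 ≤ (y - c x) * exp t := mul_nonneg (sub_nonneg.2 hcy) (exp_pos t).le
    rw [hh] at hneg
    linarith
  rcases hneg.lt_or_eq with hlt | heq
  · rw [phi, if_neg hlt.not_ge, exp_sub, tau_eq_log hy hyc, exp_log (by positivity)]
    simp only [Prod.mk.injEq, and_true]
    field_simp
  · have hexp : (c x - y) * exp t = c x := by rw [hh] at heq; linarith
    rw [phi, if_pos heq.ge, heq, hexp, mul_div_cancel_right₀ x (by positivity : c x ≠ 0)]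

lemma phi_bottom {t : ℝ} (x : ℝ) (ht : 0 ≤ t) : phi t (x, 0) = (x / exp t, 0) := by
  have hc := one_le_c x
  have hneg : hh t x 0 ≤ 0 := by
    rw [hh]
    nlinarith [one_le_exp ht]
  rw [phi_of_hh_nonpos le_rfl hneg, sub_zero, mul_comm (c x) (exp t),
    mul_div_mul_right _ _ (by positivity)]

lemma phi_wall_of_le {t x y : ℝ} (hc : c x = 1) (h : (1 - y) * exp t ≤ 1) :
    phi t (x, y) = (x, 1 - (1 - y) * exp t) := by
  have hh_eq : hh t x y = 1 - (1 - y) * exp t := by rw [hh, hc]; ring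
  rw [phi, if_pos (by rw [hh_eq]; linarith), hh_eq]

lemma phi_wall_of_ge {t x y : ℝ} (hc : c x = 1) (hy : 0 ≤ y) (h : 1 ≤ (1 - y) * exp t) :
    phi t (x, y) = (x / ((1 - y) * exp t), 0) := by
  have hneg : hh t x y ≤ 0 := by rw [hh, hc]; linarith
  rw [phi_of_hh_nonpos hy hneg, hc, mul_one]

lemma mem_Ag {γ x y : ℝ} (hγ : 0 ≤ γ) :
    (x, y) ∈ Ag γ ↔ (|x| ≤ γ ∧ y = 0) ∨ (|x| = γ ∧ y ∈ Icc 0 1) := by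
  simp only [Ag, mem_union, mem_prod, mem_singleton_iff, abs_le, abs_eq hγ, mem_Icc]
  tauto

section

variable {γ t : ℝ}

lemma mapsTo_phi_Ag (hγ : 0 ≤ γ) (hwall : ∀ x, |x| = γ → c x = 1) (ht : 0 ≤ t) :
    MapsTo (phi t) (Ag γ) (Ag γ) := by
  rintro ⟨x, y⟩ hp
  rcases (mem_Ag hγ).1 hp with ⟨hx, rfl⟩ | ⟨hx, hy0, hy1⟩
  · rw [phi_bottom x ht, mem_Ag hγ, abs_div, abs_of_pos (exp_pos t)]
    exact Or.inl ⟨(div_le_self (abs_nonneg x) (one_le_exp ht)).trans hx, rfl⟩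
  rcases le_total ((1 - y) * exp t) 1 with hle | hge
  · rw [phi_wall_of_le (hwall x hx) hle, mem_Ag hγ]
    have : 0 ≤ (1 - y) * exp t := mul_nonneg (by linarith) (exp_pos t).le
    exact Or.inr ⟨hx, by linarith, by linarith⟩
  · rw [phi_wall_of_ge (hwall x hx) hy0 hge, mem_Ag hγ, abs_div, hx,
      abs_of_pos (by linarith)]
    exact Or.inl ⟨div_le_self hγ hge, rfl⟩

lemma bottom_mem_image_phi (hγ : 0 ≤ γ) (hwall : ∀ x, |x| = γ → c x = 1) (ht : 0 ≤ t)
    {x : ℝ} (hx : |x| ≤ γ) : (x, 0) ∈ phi t '' Ag γ := by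
  rcases le_or_gt (|x| * exp t) γ with hle | hlt
  · refine ⟨(x * exp t, 0), (mem_Ag hγ).2 (Or.inl ⟨?_, rfl⟩), ?_⟩
    · rwa [abs_mul, abs_of_pos (exp_pos t)]
    · rw [phi_bottom _ ht, mul_div_cancel_right₀ x (exp_pos t).ne']
  have hx0 : 0 < |x| := by
    by_contra! h
    rw [le_antisymm h (abs_nonneg x), zero_mul] at hlt
    linarith
  have hγ0 : 0 < γ := hx0.trans_le hx
  have hxe : 0 < |x| * exp t := by positivity
  have hwall_pt : abs (x * γ / |x|) = γ := by
    rw [abs_div, abs_mul, abs_abs, abs_of_pos hγ0, mul_div_cancel_left₀ γ hx0.ne']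
  have hdrop : (1 - (1 - γ / (|x| * exp t))) * exp t = γ / |x| := by
    rw [sub_sub_cancel]
    field_simp
  have hheight : 0 ≤ 1 - γ / (|x| * exp t) := by
    rw [sub_nonneg, div_le_one hxe]
    exact hlt.le
  refine ⟨(x * γ / |x|, 1 - γ / (|x| * exp t)),
    (mem_Ag hγ).2 (Or.inr ⟨hwall_pt, hheight, sub_le_self 1 (by positivity)⟩), ?_⟩
  have hge : 1 ≤ γ / |x| := (one_le_div hx0).2 hx
  rw [phi_wall_of_ge (hwall _ hwall_pt) hheight (hdrop ▸ hge), hdrop]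
  field_simp

lemma wall_mem_image_phi (hγ : 0 ≤ γ) (ht : 0 ≤ t) {x y : ℝ} (hx : |x| = γ) (hc : c x = 1)
    (hy0 : 0 ≤ y) (hy1 : y ≤ 1) : (x, y) ∈ phi t '' Ag γ := by
  have hdrop : (1 - (1 - (1 - y) / exp t)) * exp t = 1 - y := by
    rw [sub_sub_cancel, div_mul_cancel₀ _ (exp_pos t).ne']
  refine ⟨(x, 1 - (1 - y) / exp t), (mem_Ag hγ).2 (Or.inr ⟨hx, ?_, ?_⟩), ?_⟩
  · rw [sub_nonneg, div_le_one (exp_pos t)]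
    linarith [one_le_exp ht]
  · exact sub_le_self 1 (div_nonneg (by linarith) (exp_pos t).le)
  · rw [phi_wall_of_le hc (by linarith), hdrop, sub_sub_cancel]

lemma Ag_subset_image_phi (hγ : 0 ≤ γ) (hwall : ∀ x, |x| = γ → c x = 1) (ht : 0 ≤ t) :
    Ag γ ⊆ phi t '' Ag γ := by
  rintro ⟨x, y⟩ hp
  rcases (mem_Ag hγ).1 hp with ⟨hx, rfl⟩ | ⟨hx, hy0, hy1⟩
  · exact bottom_mem_image_phi hγ hwall ht hx
  · exact wall_mem_image_phi hγ ht hx (hwall x hx) hy0 hy1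

end

/-- for `γ ∈ {1,3}`, the set `A_γ` is strictly invariant:
`φ_t(A_γ) = A_γ` for all `t ≥ 0`. -/
theorem A_strictly_invariant (γ : ℝ) (hγ : γ ∈ ({1, 3} : Set ℝ)) :
    ∀ t : ℝ, 0 ≤ t → phi t '' Ag γ = Ag γ := by
  have hγ0 : 0 ≤ γ := by rcases hγ with rfl | rfl <;> norm_num
  have hwall : ∀ x, |x| = γ → c x = 1 := fun x hx ↦ by
    apply c_eq_one_of_mem
    rcases hγ with rfl | rfl <;> rcases (abs_eq hγ0).1 hx with rfl | rfl <;> norm_num [Gam]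
  intro t ht
  exact (mapsTo_phi_Ag hγ0 hwall ht).image_subset.antisymm (Ag_subset_image_phi hγ0 hwall ht)
end
end

section
/- In the deterministic flow φ on E = ℝ × [0,1], no compact strictly invariant set contained in ℝ × {0} can attract all points of E in the metric ρ((x,y),(x̃,ỹ)) = |ỹ−y| + |H(x̃)−H(x)| if the singleton {(0,0)} fails to attract some point; combined with the fact that {(0,0)} is the unique compact strictly invariant subset of ℝ × {0}, any two ρ-attractors A₁ and A₃ as above whose intersection lies in ℝ × {0} admit no common attractor contained in both, i.e. there is no smallest attractor. Formally: if A ⊆ A₁ ∩ A₃ = [−1,1] × {0} is compact, strictly invariant under φ, then A = {(0,0)}. -/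
noncomputable section

/-!
On the axis the flow is the linear contraction `(x, 0) ↦ (x e^{-t}, 0)`, and `A ⊆ A₁ ∩ A₃` lies on
the axis. A point of `A` maximising `|x|` is, by invariance, the image under `φ₁` of a point of `A`
with `|x|` larger by the factor `e`; so the maximum is `0` and `A = {(0,0)}`.
-/

theorem IsCompact.forall_le_zero_of_subset_image {X : Type*} [TopologicalSpace X] {A : Set X}
    (hA : IsCompact A) {f : X → X} (hf : A ⊆ f '' A) {g : X → ℝ} (hg : ContinuousOn g A)
    (hdec : ∀ p ∈ A, 0 < g (f p) → g (f p) < g p) :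
    ∀ p ∈ A, g p ≤ 0 := by
  rcases A.eq_empty_or_nonempty with rfl | hne
  · simp
  obtain ⟨p₀, hp₀, hmax⟩ := hA.exists_isMaxOn hne hg
  obtain ⟨q, hq, rfl⟩ := hf hp₀
  intro p hp
  by_contra! hpos
  have hfq : 0 < g (f q) := hpos.trans_le (hmax hp)
  exact (hdec q hq hfq).not_ge (hmax hq)

lemma c_pos (x : ℝ) : 0 < c x := by
  have : 0 ≤ min (Metric.infDist x Gam) 1 := le_min Metric.infDist_nonneg zero_le_one
  unfold c
  linarith

lemma hh_zero_right (t x : ℝ) : hh t x 0 = c x * (1 - Real.exp t) := by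
  unfold hh
  ring

lemma hh_zero_right_eq_zero_iff {t x : ℝ} : hh t x 0 = 0 ↔ t = 0 := by
  rw [hh_zero_right, mul_eq_zero, sub_eq_zero, eq_comm (a := 1), Real.exp_eq_one_iff]
  simp [(c_pos x).ne']

lemma tau_zero_right (x : ℝ) : tau x 0 = 0 := by
  have hset : {s : ℝ | 0 ≤ s ∧ hh s x 0 = 0} = {0} := by
    ext s
    simp +contextual [hh_zero_right_eq_zero_iff]
  rw [tau, hset, csInf_singleton]

lemma phi_mk_zero {t : ℝ} (ht : 0 ≤ t) (x : ℝ) : phi t (x, 0) = (x * Real.exp (-t), 0) := by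
  rcases ht.eq_or_lt with rfl | ht
  · simp [phi, hh_zero_right]
  · have hneg : hh t x 0 < 0 := by
      rw [hh_zero_right]
      exact mul_neg_of_pos_of_neg (c_pos x) (sub_neg.mpr (Real.one_lt_exp_iff.mpr ht))
    simp [phi, hneg.not_ge, tau_zero_right]

lemma snd_eq_zero_of_mem_Ag_one_inter_Ag_three {p : ℝ × ℝ} (hp : p ∈ Ag 1 ∩ Ag 3) : p.2 = 0 := by
  obtain ⟨hp1, hp3⟩ := hp
  simp only [Ag, Set.mem_union, Set.mem_prod, Set.mem_singleton_iff, Set.mem_Icc] at *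
  rcases hp1 with (h | h) | h <;> rcases hp3 with (h' | h') | h' <;> linarith [h.1, h'.1, h.2, h'.2]

/-- any nonempty compact set `A ⊆ A₁ ∩ A₃` (`= [−1,1] × {0}`) that
is strictly invariant under the flow (`φ_t(A) = A` for all `t ≥ 0`) must equal
`{(0,0)}`; hence there is no smaller common attractor inside `A₁` and `A₃`. -/
theorem no_smaller_invariant_set (A : Set (ℝ × ℝ))
    (hsub : A ⊆ Ag 1 ∩ Ag 3) (hne : A.Nonempty) (hA : IsCompact A)
    (hinv : ∀ t : ℝ, 0 ≤ t → phi t '' A = A) :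
    A = {((0:ℝ), (0:ℝ))} := by
  have on_axis : ∀ p ∈ A, p = (p.1, 0) := fun p hp =>
    Prod.ext rfl (snd_eq_zero_of_mem_Ag_one_inter_Ag_three (hsub hp))
  have hdec : ∀ p ∈ A, 0 < |(phi 1 p).1| → |(phi 1 p).1| < |p.1| := by
    intro p hp hpos
    rw [on_axis p hp, phi_mk_zero zero_le_one] at hpos ⊢
    rw [abs_mul, Real.abs_exp] at hpos ⊢
    exact mul_lt_of_lt_one_right (pos_of_mul_pos_left hpos (Real.exp_pos _).le)
      (Real.exp_lt_one_iff.mpr (by norm_num))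
  have hx : ∀ p ∈ A, |p.1| ≤ 0 :=
    hA.forall_le_zero_of_subset_image (hinv 1 zero_le_one).ge
      continuous_fst.abs.continuousOn hdec
  refine hne.subset_singleton_iff.mp fun p hp => ?_
  rw [on_axis p hp, abs_nonpos_iff.mp (hx p hp)]
  rfl
end
end
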